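/- Let {u_i}_{i∈I} and {v_i}_{i∈I} be frames of H with pre-frame operators T₁ and T₂ respectively. Then the correspondence L(Σ u_i q_i) = Σ v_i q_i (for finitely supported quaternion sequences {q_i}) extends to a well-defined bounded right ℍ-linear operator on H if and only if Ker(T₁) ⊆ Ker(T₂). -/

import Mathlib

noncomputable section
open MulOpposite

abbrev ℍ := Quaternion ℝ

/-- A right quaternionic Hilbert space: a complete normed additive group with a right
ℍ-module structure (encoded via scalars in `ℍᵐᵒᵖ`, so `op q • v` is the right action `v.q`)
and an ℍ-valued Hermitian inner product compatible with the norm. -/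
class QuatHilbert (H : Type*) extends NormedAddCommGroup H, Module ℍᵐᵒᵖ H, CompleteSpace H where
  qinner : H → H → ℍ
  conj_symm : ∀ u v, qinner u v = star (qinner v u)
  add_right : ∀ u v w, qinner u (v + w) = qinner u v + qinner u w
  smul_right : ∀ u v (q : ℍ), qinner u (op q • v) = qinner u v * q
  norm_sq : ∀ u, ‖u‖ ^ 2 = (qinner u u).re
  norm_op_smul : ∀ (q : ℍ) (u : H), ‖op q • u‖ = ‖u‖ * ‖q‖

notation "⟪" x ", " y "⟫" => QuatHilbert.qinner x y

/-- `Ls` is the adjoint of `L`: `⟨Lu, v⟩ = ⟨u, L*v⟩` for all `u, v`. -/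
def IsAdjointPair {H K : Type*} [QuatHilbert H] [QuatHilbert K]
    (L : H →L[ℍᵐᵒᵖ] K) (Ls : K →L[ℍᵐᵒᵖ] H) : Prop :=
  ∀ (u : H) (v : K), ⟪L u, v⟫ = ⟪u, Ls v⟫

/-- Operator norm of a bounded right ℍ-linear operator. -/
def qOpNorm {E F : Type*} [NormedAddCommGroup E] [NormedAddCommGroup F]
    [Module ℍᵐᵒᵖ E] [Module ℍᵐᵒᵖ F] (L : E →L[ℍᵐᵒᵖ] F) : ℝ :=
  sInf {M : ℝ | 0 ≤ M ∧ ∀ u : E, ‖L u‖ ≤ M * ‖u‖}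

/-- `u` is a frame with frame bounds `A`, `B` :
`A‖x‖² ≤ Σ_i |⟨u_i, x⟩|² ≤ B‖x‖²` for all `x`. -/
def IsFrameWith {H : Type*} [QuatHilbert H] {I : Type*} (u : I → H) (A B : ℝ) : Prop :=
  ∀ x : H, Summable (fun i => ‖⟪u i, x⟫‖ ^ 2) ∧
    A * ‖x‖ ^ 2 ≤ ∑' i, ‖⟪u i, x⟫‖ ^ 2 ∧ (∑' i, ‖⟪u i, x⟫‖ ^ 2) ≤ B * ‖x‖ ^ 2

/-- `u` is a frame: there are bounds `0 < A ≤ B`. -/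
def IsFrame {H : Type*} [QuatHilbert H] {I : Type*} (u : I → H) : Prop :=
  ∃ A B : ℝ, 0 < A ∧ A ≤ B ∧ IsFrameWith u A B

/-- `u` is a Bessel sequence: `Σ_i |⟨u_i, x⟩|² ≤ B‖x‖²` for some `B`. -/
def IsBessel {H : Type*} [QuatHilbert H] {I : Type*} (u : I → H) : Prop :=
  ∃ B : ℝ, 0 < B ∧ ∀ x : H, Summable (fun i => ‖⟪u i, x⟫‖ ^ 2) ∧
    (∑' i, ‖⟪u i, x⟫‖ ^ 2) ≤ B * ‖x‖ ^ 2

/-- `S` is the frame operator of `u` : `S x = Σ_i u_i ⟨u_i, x⟩`. -/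
def IsFrameOp {H : Type*} [QuatHilbert H] {I : Type*} (u : I → H) (S : H →L[ℍᵐᵒᵖ] H) : Prop :=
  ∀ x : H, HasSum (fun i => op ⟪u i, x⟫ • u i) (S x)

/-- The space ℓ²(ℍ) of square-summable quaternion families. -/
abbrev lp2 (I : Type*) := lp (fun _ : I => ℍ) 2

/-- `T` is the pre-frame (synthesis) operator of `u` : `T q = Σ_i u_i q_i`. -/
def IsPreFrameOp {H : Type*} [QuatHilbert H] {I : Type*} (u : I → H)
    (T : lp2 I →L[ℍᵐᵒᵖ] H) : Prop :=
  ∀ q : lp2 I, HasSum (fun i => op (q i) • u i) (T q)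

/-- The ℓ²(ℍ) inner product `⟨p, q⟩ = Σ_i conj(p_i) q_i`. -/
def l2inner {I : Type*} (p q : lp2 I) : ℍ := ∑' i, star (p i) * q i

/-- Orthogonal complement of a set in a right quaternionic Hilbert space. -/
def orthoComp {H : Type*} [QuatHilbert H] (A : Set H) : Set H :=
  {v : H | ∀ u ∈ A, ⟪v, u⟫ = 0}

/-- Orthogonal complement in ℓ²(ℍ). -/
def l2orthoComp {I : Type*} (A : Set (lp2 I)) : Set (lp2 I) :=
  {v : lp2 I | ∀ u ∈ A, l2inner v u = 0}

/-! ### Auxiliary real Hilbert space structure -/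

section Aux

open QuatHilbert

variable {H : Type*} [QuatHilbert H]

lemma qinner_add_left (x y z : H) : ⟪x + y, z⟫ = ⟪x, z⟫ + ⟪y, z⟫ := by
  rw [conj_symm, add_right, star_add, ← conj_symm, ← conj_symm]

lemma qinner_smul_left (q : ℍ) (x y : H) : ⟪op q • x, y⟫ = star q * ⟪x, y⟫ := by
  rw [conj_symm, smul_right, star_mul, ← conj_symm]

/-- The canonical ring homomorphism `ℝ →+* ℍᵐᵒᵖ`. -/
def realToQop : ℝ →+* ℍᵐᵒᵖ :=
  (algebraMap ℝ ℍ).toOpposite fun x y => by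
    simp only [Quaternion.algebraMap_def]
    exact Quaternion.coe_commute x _

instance (priority := 100) quatRealModule : Module ℝ H := Module.compHom H realToQop

lemma rsmul_def (r : ℝ) (x : H) : r • x = op (r : ℍ) • x := rfl

instance (priority := 100) quatRealNormedSpace : NormedSpace ℝ H where
  norm_smul_le r x := by
    rw [rsmul_def, norm_op_smul, Quaternion.norm_coe, mul_comm]

instance (priority := 100) quatRealInner : Inner ℝ H :=
  ⟨fun x y => (⟪x, y⟫).re⟩

lemma rinner_def (x y : H) : (inner ℝ x y : ℝ) = (⟪x, y⟫).re := rfl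

instance (priority := 100) quatRealInnerProductSpace : InnerProductSpace ℝ H where
  norm_sq_eq_re_inner x := by simpa [rinner_def] using norm_sq x
  conj_inner_symm x y := by
    simp only [rinner_def, starRingEnd_apply, star_trivial]
    rw [conj_symm x y, Quaternion.re_star]
  add_left x y z := by
    simp only [rinner_def, qinner_add_left, Quaternion.re_add]
  smul_left x y r := by
    simp only [rinner_def, rsmul_def, qinner_smul_left, starRingEnd_apply, star_trivial]
    rw [Quaternion.star_coe, Quaternion.coe_mul_eq_smul, Quaternion.re_smul]
    rfl

lemma lp_real_smul {I : Type*} (r : ℝ) (q : lp2 I) : r • q = op (r : ℍ) • q := by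
  apply lp.ext
  funext i
  rw [lp.coeFn_smul, lp.coeFn_smul]
  simp only [Pi.smul_apply]
  rw [MulOpposite.smul_eq_mul_unop]
  simp [Algebra.smul_def, Quaternion.coe_commutes]

/-- An `ℍᵐᵒᵖ`-linear continuous map, viewed as a real continuous linear map. -/
def toRealCLM {I : Type*} (T : lp2 I →L[ℍᵐᵒᵖ] H) : lp2 I →L[ℝ] H where
  toLinearMap :=
    { toFun := T
      map_add' := fun p q => map_add T p q
      map_smul' := fun r q => by
        show T (r • q) = r • T q
        rw [lp_real_smul, map_smul, rsmul_def] }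
  cont := T.cont

@[simp] lemma toRealCLM_apply {I : Type*} (T : lp2 I →L[ℍᵐᵒᵖ] H) (q : lp2 I) :
    toRealCLM T q = T q := rfl

/-- The analysis operator of a Bessel family, as a bare function into `ℓ²`. -/
def analysisFun {I : Type*} (u : I → H)
    (hs : ∀ x : H, Summable fun i => ‖⟪u i, x⟫‖ ^ 2) (x : H) : lp2 I :=
  ⟨fun i => ⟪u i, x⟫, by
    apply memℓp_gen
    have h2 : ((2 : ENNReal).toReal) = ((2 : ℕ) : ℝ) := by norm_num
    simpa [h2, Real.rpow_natCast] using hs x⟩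

@[simp] lemma analysisFun_apply {I : Type*} (u : I → H)
    (hs : ∀ x : H, Summable fun i => ‖⟪u i, x⟫‖ ^ 2) (x : H) (i : I) :
    (analysisFun u hs x : I → ℍ) i = ⟪u i, x⟫ := rfl

/-- The analysis operator as a real linear map. -/
def analysisLM {I : Type*} (u : I → H)
    (hs : ∀ x : H, Summable fun i => ‖⟪u i, x⟫‖ ^ 2) : H →ₗ[ℝ] lp2 I where
  toFun := analysisFun u hs
  map_add' x y := by
    apply lp.ext
    funext i
    rw [lp.coeFn_add]
    simp [analysisFun, add_right]
  map_smul' r x := by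
    apply lp.ext
    funext i
    rw [lp.coeFn_smul]
    simp only [Pi.smul_apply, RingHom.id_apply]
    show ⟪u i, r • x⟫ = r • ⟪u i, x⟫
    rw [rsmul_def, smul_right, Algebra.smul_def, Quaternion.algebraMap_def,
      Quaternion.coe_commutes]

end Aux

/-- For frames `{u_i}`, `{v_i}` with pre-frame operators `T₁`, `T₂`, the map
`Σ u_i q_i ↦ Σ v_i q_i` extends to a bounded right ℍ-linear operator `L` on `H` (with
`L u_i = v_i`) iff `Ker T₁ ⊆ Ker T₂`. -/
theorem stmt16 {H : Type*} [QuatHilbert H] {I : Type*} [Countable I]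
    (u v : I → H) (hu : IsFrame u) (hv : IsFrame v)
    (T1 T2 : lp2 I →L[ℍᵐᵒᵖ] H) (hT1 : IsPreFrameOp u T1) (hT2 : IsPreFrameOp v T2) :
    (∃ L : H →L[ℍᵐᵒᵖ] H, ∀ i : I, L (u i) = v i) ↔
      LinearMap.ker (T1 : lp2 I →ₗ[ℍᵐᵒᵖ] H) ≤ LinearMap.ker (T2 : lp2 I →ₗ[ℍᵐᵒᵖ] H) := by
  classical
  constructor
  · rintro ⟨L, hL⟩ q hq
    have hq0 : T1 q = 0 := hq
    have h1 := hT1 q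
    rw [hq0] at h1
    have h2 := h1.mapL L
    rw [map_zero] at h2
    have hfun : (fun i => L (op (q i) • u i)) = fun i => op (q i) • v i :=
      funext fun i => by rw [map_smul, hL]
    rw [hfun] at h2
    exact (hT2 q).unique h2
  · intro hle
    obtain ⟨A, Bu, hA, hAB, hframe⟩ := hu
    have hs : ∀ x : H, Summable fun i => ‖⟪u i, x⟫‖ ^ 2 := fun x => (hframe x).1
    have hBu : (0 : ℝ) ≤ Bu := le_trans hA.le hAB
    -- the analysis operator is bounded
    have hbound : ∀ x : H, ‖analysisLM u hs x‖ ≤ Real.sqrt Bu * ‖x‖ := by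
      intro x
      have h2 : (0 : ℝ) < (2 : ENNReal).toReal := by norm_num
      have hn := lp.norm_rpow_eq_tsum h2 (analysisFun u hs x)
      have hconv : ((2 : ENNReal).toReal) = ((2 : ℕ) : ℝ) := by norm_num
      rw [hconv] at hn
      simp only [Real.rpow_natCast] at hn
      have hsq : ‖analysisLM u hs x‖ ^ 2 ≤ Bu * ‖x‖ ^ 2 := by
        have : ‖analysisLM u hs x‖ = ‖analysisFun u hs x‖ := rfl
        rw [this, hn]
        simpa using (hframe x).2.2
      calc ‖analysisLM u hs x‖ = Real.sqrt (‖analysisLM u hs x‖ ^ 2) :=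
            (Real.sqrt_sq (norm_nonneg _)).symm
        _ ≤ Real.sqrt (Bu * ‖x‖ ^ 2) := Real.sqrt_le_sqrt hsq
        _ = Real.sqrt Bu * ‖x‖ := by
            rw [Real.sqrt_mul hBu, Real.sqrt_sq (norm_nonneg _)]
    let Θ : H →L[ℝ] lp2 I := LinearMap.mkContinuous (analysisLM u hs) (Real.sqrt Bu) hbound
    let S : H →L[ℝ] H := (toRealCLM T1).comp Θ
    have hSsum : ∀ x : H, HasSum (fun i => op ⟪u i, x⟫ • u i) (S x) := fun x => hT1 (Θ x)
    -- coercivity of the frame operator S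
    have hinner : ∀ x : H, A * ‖x‖ ^ 2 ≤ (inner ℝ x (S x) : ℝ) := by
      intro x
      have h1 := (hSsum x).mapL (innerSL ℝ x)
      have hterm : (fun i => (innerSL ℝ x) (op ⟪u i, x⟫ • u i)) =
          fun i => ‖⟪u i, x⟫‖ ^ 2 := by
        funext i
        show (⟪x, op ⟪u i, x⟫ • u i⟫).re = ‖⟪u i, x⟫‖ ^ 2
        rw [QuatHilbert.smul_right, QuatHilbert.conj_symm x (u i),
          Quaternion.star_mul_self, Quaternion.re_coe,
          Quaternion.normSq_eq_norm_mul_self, ← pow_two]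
      rw [hterm] at h1
      have := h1.tsum_eq
      have hmain := (hframe x).2.1
      rw [this] at hmain
      exact hmain
    -- S is bounded below, has closed range, and is surjective
    have hbelow : ∀ x : H, A * ‖x‖ ≤ ‖S x‖ := by
      intro x
      rcases eq_or_ne x 0 with rfl | hx
      · simp
      · have hx' : (0 : ℝ) < ‖x‖ := norm_pos_iff.mpr hx
        have h1 : A * ‖x‖ * ‖x‖ ≤ (inner ℝ x (S x) : ℝ) := by
          have := hinner x; nlinarith
        have h2 : (inner ℝ x (S x) : ℝ) ≤ ‖x‖ * ‖S x‖ := real_inner_le_norm x (S x)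
        nlinarith
    have hanti : AntilipschitzWith (A⁻¹).toNNReal S := by
      refine ContinuousLinearMap.antilipschitz_of_bound S fun x => ?_
      have hAinv : ((A⁻¹).toNNReal : ℝ) = A⁻¹ := by
        rw [Real.coe_toNNReal _ (by positivity)]
      rw [hAinv, ← inv_mul_le_iff₀ (by positivity : (0:ℝ) < A⁻¹), inv_inv]
      exact hbelow x
    have hclosed : IsClosed (LinearMap.range (S : H →ₗ[ℝ] H) : Set H) :=
      by rw [LinearMap.coe_range, ContinuousLinearMap.coe_coe]; exact hanti.isClosed_range S.uniformContinuous
    have : CompleteSpace (LinearMap.range (S : H →ₗ[ℝ] H)) := hclosed.completeSpace_coe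
    have hrange : LinearMap.range (S : H →ₗ[ℝ] H) = ⊤ := by
      rw [← (LinearMap.range (S : H →ₗ[ℝ] H)).orthogonal_orthogonal, Submodule.eq_top_iff']
      intro x
      rw [Submodule.mem_orthogonal]
      intro w hw
      have h0 : (inner ℝ (S w) w : ℝ) = 0 := hw (S w) ⟨w, rfl⟩
      have hww : (inner ℝ w (S w) : ℝ) = 0 := by rw [real_inner_comm]; exact h0
      have hw0 : w = 0 := by
        have h1 := hinner w
        rw [hww] at h1
        have h2 : ‖w‖ ^ 2 ≤ 0 := by nlinarith
        have h3 : ‖w‖ = 0 := by nlinarith [sq_nonneg ‖w‖, norm_nonneg w]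
        exact norm_eq_zero.mp h3
      rw [hw0]
      exact inner_zero_left x
    have hSsurj : Function.Surjective S := LinearMap.range_eq_top.mp hrange
    have hT1surjR : Function.Surjective (toRealCLM T1) := by
      intro x
      obtain ⟨y, hy⟩ := hSsurj x
      exact ⟨Θ y, hy⟩
    obtain ⟨C, hCpos, hC⟩ := (toRealCLM T1).exists_preimage_norm_le hT1surjR
    have hT1surj : Function.Surjective T1 := hT1surjR
    -- well-definedness
    have hker : ∀ p q : lp2 I, T1 p = T1 q → T2 p = T2 q := by
      intro p q h
      have hm : p - q ∈ LinearMap.ker (T1 : lp2 I →ₗ[ℍᵐᵒᵖ] H) := by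
        rw [LinearMap.mem_ker, map_sub, ContinuousLinearMap.coe_coe, h, sub_self]
      have hm2 := hle hm
      rw [LinearMap.mem_ker, map_sub, sub_eq_zero] at hm2
      exact hm2
    let g : H → lp2 I := Function.surjInv hT1surj
    have hgT : ∀ x, T1 (g x) = x := fun x => Function.surjInv_eq hT1surj x
    let L0 : H → H := fun x => T2 (g x)
    have hkey : ∀ q : lp2 I, L0 (T1 q) = T2 q := fun q => hker _ _ (hgT (T1 q))
    have hadd : ∀ x y, L0 (x + y) = L0 x + L0 y := by
      intro x y
      have h1 : T1 (g x + g y) = x + y := by rw [map_add, hgT, hgT]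
      calc L0 (x + y) = L0 (T1 (g x + g y)) := by rw [h1]
        _ = T2 (g x + g y) := hkey _
        _ = T2 (g x) + T2 (g y) := map_add _ _ _
        _ = L0 x + L0 y := rfl
    have hsmul : ∀ (c : ℍᵐᵒᵖ) (x : H), L0 (c • x) = c • L0 x := by
      intro c x
      have h1 : T1 (c • g x) = c • x := by rw [map_smul, hgT]
      calc L0 (c • x) = L0 (T1 (c • g x)) := by rw [h1]
        _ = T2 (c • g x) := hkey _
        _ = c • T2 (g x) := map_smul _ _ _
        _ = c • L0 x := rfl
    let Llin : H →ₗ[ℍᵐᵒᵖ] H :=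
      { toFun := L0, map_add' := hadd, map_smul' := hsmul }
    have hLbound : ∀ x, ‖Llin x‖ ≤ (‖toRealCLM T2‖ * C) * ‖x‖ := by
      intro x
      obtain ⟨q, hq1, hq2⟩ := hC x
      have hLx : Llin x = T2 q := by
        show L0 x = T2 q
        have : T1 q = x := hq1
        rw [← this]
        exact hkey q
      rw [hLx]
      calc ‖T2 q‖ = ‖toRealCLM T2 q‖ := rfl
        _ ≤ ‖toRealCLM T2‖ * ‖q‖ := (toRealCLM T2).le_opNorm q
        _ ≤ ‖toRealCLM T2‖ * (C * ‖x‖) :=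
            mul_le_mul_of_nonneg_left hq2 (ContinuousLinearMap.opNorm_nonneg _)
        _ = (‖toRealCLM T2‖ * C) * ‖x‖ := by ring
    let L : H →L[ℍᵐᵒᵖ] H :=
      ⟨Llin, AddMonoidHomClass.continuous_of_bound Llin _ hLbound⟩
    refine ⟨L, fun i => ?_⟩
    have hsingle : ∀ (w : I → H) (T : lp2 I →L[ℍᵐᵒᵖ] H), IsPreFrameOp w T →
        T (lp.single 2 i (1 : ℍ)) = w i := by
      intro w T hT
      have h1 := hT (lp.single 2 i (1 : ℍ))
      have hfun : (fun j => op ((lp.single 2 i (1 : ℍ) : lp2 I) j) • w j)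
          = fun j => if j = i then w i else 0 := by
        funext j
        by_cases h : j = i
        · subst h; simp [lp.single_apply]
        · simp [lp.single_apply, h]
      rw [hfun] at h1
      exact h1.unique (hasSum_ite_eq i (w i))
    calc L (u i) = L0 (T1 (lp.single 2 i (1 : ℍ))) := by rw [hsingle u T1 hT1]; rfl
      _ = T2 (lp.single 2 i (1 : ℍ)) := hkey _
      _ = v i := hsingle v T2 hT2
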